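/- arXiv:2302.10316 — 2 statements merged into one kernel-verified Lean document; each statement's English description precedes it below -/
import Mathlib

section
/- Let E be any directed graph. Then each vertex of E connects to a sink, connects to a vertex on an extreme cycle, connects to a vertex on a cycle without exits, or lies on an infinite path containing a sequence of vertices v₀ > v₁ > v₂ > … (i.e., vᵢ ≥ vᵢ₊₁ and not vᵢ₊₁ ≥ vᵢ for all i). -/
/-- A directed graph: vertices, edges, source and range maps. -/
structure DGraph where
  V : Type
  Ed : Type
  s : Ed → V
  r : Ed → V

namespace DGraph

variable (E : DGraph)

/-- One-step adjacency: there is an edge from `u` to `v`. -/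
def Adj (u v : E.V) : Prop := ∃ e, E.s e = u ∧ E.r e = v

/-- `u ≥ v`: there is a (finite) path from `u` to `v`. -/
def Reaches (u v : E.V) : Prop := Relation.ReflTransGen E.Adj u v

/-- The tree `T(W)` of a set of vertices. -/
def tree (W : Set E.V) : Set E.V := {u | ∃ v ∈ W, E.Reaches v u}

/-- The root `R(W)` of a set of vertices. -/
def root (W : Set E.V) : Set E.V := {u | ∃ v ∈ W, E.Reaches u v}

/-- The set of edges emitted by `v`. -/
def emits (v : E.V) : Set E.Ed := {e | E.s e = v}

/-- A sink emits no edges. -/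
def IsSink (v : E.V) : Prop := E.emits v = ∅

/-- An infinite emitter emits infinitely many edges. -/
def IsInfEmitter (v : E.V) : Prop := (E.emits v).Infinite

/-- A regular vertex is neither a sink nor an infinite emitter. -/
def IsRegular (v : E.V) : Prop := (E.emits v).Nonempty ∧ (E.emits v).Finite

/-- A hereditary set of vertices: `T(H) ⊆ H`. -/
def Hereditary (H : Set E.V) : Prop := ∀ u ∈ H, ∀ v, E.Reaches u v → v ∈ H

/-- A saturated set of vertices. -/
def Saturated (H : Set E.V) : Prop :=
  ∀ v, E.IsRegular v → (∀ e ∈ E.emits v, E.r e ∈ H) → v ∈ H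

/-- The saturated closure of `W`: the smallest hereditary and saturated set containing `W`. -/
def satClosure (W : Set E.V) : Set E.V :=
  ⋂₀ {H : Set E.V | E.Hereditary H ∧ E.Saturated H ∧ W ⊆ H}

/-- `es` is a finite walk (path) starting at `u`; `es = []` is the trivial path at `u`. -/
def IsWalkFrom (u : E.V) (es : List E.Ed) : Prop :=
  es.Chain' (fun e f => E.r e = E.s f) ∧ ∀ e ∈ es.head?, E.s e = u

/-- The terminal vertex (range) of the walk `es` starting at `u`. -/
def endVert (u : E.V) (es : List E.Ed) : E.V := es.getLast?.elim u E.r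

/-- The set of vertices on the walk `es` starting at `u`. -/
def walkVerts (u : E.V) (es : List E.Ed) : Set E.V :=
  insert u {v | ∃ e ∈ es, E.r e = v}

/-- An infinite path. -/
def IsInfPath (f : ℕ → E.Ed) : Prop := ∀ n, E.r (f n) = E.s (f (n + 1))

/-- The set of vertices on an infinite path. -/
def infVerts (f : ℕ → E.Ed) : Set E.V := Set.range fun n => E.s (f n)

/-- Elements of `E^{≤∞}`: finite walks or infinite paths. -/
inductive GPath (E : DGraph) : Type where
  | fin : E.V → List E.Ed → GPath E
  | inf : (ℕ → E.Ed) → GPath E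

/-- Membership in `E^{≤∞}`: a well-formed finite path ending in a sink or an infinite
emitter, or an infinite path. -/
def gmem : GPath E → Prop
  | .fin u es => E.IsWalkFrom u es ∧
      (E.IsSink (E.endVert u es) ∨ E.IsInfEmitter (E.endVert u es))
  | .inf f => E.IsInfPath f

/-- `p⁰`, the vertex set of an element of `E^{≤∞}`. -/
def gverts : GPath E → Set E.V
  | .fin u es => E.walkVerts u es
  | .inf f => E.infVerts f

/-- The graph `E` is cofinal. -/
def Cofinal : Prop :=
  ∀ v : E.V, ∀ p : GPath E, E.gmem p → ∃ w ∈ E.gverts p, E.Reaches v w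

/-- `es` is a cycle based at `u`. -/
def IsCycle (u : E.V) (es : List E.Ed) : Prop :=
  es ≠ [] ∧ E.IsWalkFrom u es ∧ E.endVert u es = u ∧ (es.map E.s).Nodup

/-- The cycle `es` (based at `u`) has an exit. -/
def HasExit (u : E.V) (es : List E.Ed) : Prop :=
  ∃ v ∈ E.walkVerts u es, ∃ e, E.s e = v ∧ e ∉ es

/-- An extreme cycle: a cycle with an exit such that `T(c⁰) ⊆ R(c⁰)`. -/
def IsExtremeCycle (u : E.V) (es : List E.Ed) : Prop :=
  E.IsCycle u es ∧ E.HasExit u es ∧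
    E.tree (E.walkVerts u es) ⊆ E.root (E.walkVerts u es)

/-- `v` lies on some cycle. -/
def OnCycle (v : E.V) : Prop := ∃ u es, E.IsCycle u es ∧ v ∈ E.walkVerts u es

/-- A terminal (infinite) path. -/
def IsTerminalPath (f : ℕ → E.Ed) : Prop :=
  E.IsInfPath f ∧
  (∀ v ∈ E.tree (E.infVerts f), ¬ E.IsInfEmitter v ∧ ¬ E.OnCycle v) ∧
  (∀ g : ℕ → E.Ed, E.IsInfPath g → E.s (g 0) ∈ E.infVerts f →
      E.tree (E.infVerts g) ⊆ E.root (E.infVerts g))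

/-- A terminal vertex: a sink, a vertex on a cycle without exits, a vertex on an
extreme cycle, or a vertex on a terminal path. -/
def IsTerminalVert (v : E.V) : Prop :=
  E.IsSink v ∨
  (∃ u es, E.IsCycle u es ∧ ¬ E.HasExit u es ∧ v ∈ E.walkVerts u es) ∨
  (∃ u es, E.IsExtremeCycle u es ∧ v ∈ E.walkVerts u es) ∨
  (∃ f, E.IsTerminalPath f ∧ v ∈ E.infVerts f)

/-- `p ∼ q` for elements of `E^{≤∞}`: `R(p⁰) = R(q⁰)`. -/
def pequiv (p q : GPath E) : Prop := E.root (E.gverts p) = E.root (E.gverts q)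

/-- `v ≈ w` for terminal vertices. -/
def approx (v w : E.V) : Prop :=
  E.IsTerminalVert v ∧ E.IsTerminalVert w ∧
  ∃ p q : GPath E, E.gmem p ∧ E.gmem q ∧ v ∈ E.gverts p ∧ w ∈ E.gverts q ∧ E.pequiv p q

/-- The cluster of a terminal vertex `v`: its `≈`-equivalence class. -/
def cluster (v : E.V) : Set E.V := {w | E.approx v w}

/-- `C` is a cluster of `E`. -/
def IsCluster (C : Set E.V) : Prop := ∃ v, E.IsTerminalVert v ∧ C = E.cluster v

/-- `Ter(E)`: the saturated closure of the set of terminal vertices. -/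
def Ter : Set E.V := E.satClosure {v | E.IsTerminalVert v}

/-- The set `B_H` of breaking vertices of a (hereditary and saturated) set `H`. -/
def breaking (H : Set E.V) : Set E.V :=
  {v | v ∉ H ∧ E.IsInfEmitter v ∧
    {e | E.s e = v ∧ E.r e ∉ H}.Nonempty ∧ {e | E.s e = v ∧ E.r e ∉ H}.Finite}

/-- `(H, S)` is an admissible pair. -/
def Admissible (H S : Set E.V) : Prop :=
  E.Hereditary H ∧ E.Saturated H ∧ S ⊆ E.breaking H

end DGraph

/-!
If `v` reaches a sink we are done. Call `u` closed if every vertex reachable from `u` reaches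
back to `u`. A closed vertex that is not a sink lies on a closed walk, and shortening that walk at a
repeated vertex gives a cycle `c` reachable from `u`; every vertex of `T(c⁰)` is reachable from
`u`, hence reaches back to `u` and so to `c`. Thus `T(c⁰) ⊆ R(c⁰)`: `c` is extreme or has no
exit. If no vertex reachable from `v` is closed, each such `u` reaches some `u'` with `u > u'`;
iterating from `v` gives `v = w₀ > w₁ > ⋯`, and concatenating paths `wᵢ → wᵢ₊₁` yields the
infinite path.
-/

theorem exists_seq_of_forall_exists_rel {α : Type*} {p : α → Prop} {r : α → α → Prop}
    (h : ∀ x, p x → ∃ y, p y ∧ r x y) {a : α} (ha : p a) :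
    ∃ f : ℕ → α, f 0 = a ∧ ∀ n, r (f n) (f (n + 1)) := by
  choose g hgp hgr using h
  let next : {x // p x} → {x // p x} := fun x => ⟨g x x.2, hgp x x.2⟩
  refine ⟨fun n => (next^[n] ⟨a, ha⟩).1, rfl, fun n => ?_⟩
  simp only [Function.iterate_succ_apply']
  exact hgr _ _

/-- State `(a, l, k)`: standing at `a`, still to visit `l`, heading for `u k`. When `l` is used
up, jump onto the `k`-th block `c k :: m k`, which leads from `u k` to `u (k + 1)`. -/
def chainConcatStep {α : Type*} (c : ℕ → α) (m : ℕ → List α) :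
    α × List α × ℕ → α × List α × ℕ
  | (_, b :: l, k) => (b, l, k)
  | (_, [], k) => (c k, m k, k + 1)

def ChainConcatInv {α : Type*} (r : α → α → Prop) (u : ℕ → α) (s : α × List α × ℕ) : Prop :=
  List.IsChain r (s.1 :: s.2.1) ∧ (s.1 :: s.2.1).getLast (List.cons_ne_nil _ _) = u s.2.2

section ChainConcat

variable {α : Type*} {r : α → α → Prop} {u c : ℕ → α} {m : ℕ → List α}

theorem ChainConcatInv.step (hchain : ∀ k, List.IsChain r (u k :: c k :: m k))
    (hlast : ∀ k, (c k :: m k).getLast (List.cons_ne_nil _ _) = u (k + 1))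
    {s : α × List α × ℕ} (hs : ChainConcatInv r u s) :
    ChainConcatInv r u (chainConcatStep c m s) ∧ r s.1 (chainConcatStep c m s).1 := by
  obtain ⟨a, _ | ⟨b, l⟩, k⟩ := s
  · obtain rfl : a = u k := hs.2
    have hk := List.isChain_cons_cons.1 (hchain k)
    exact ⟨⟨hk.2, hlast k⟩, hk.1⟩
  · obtain ⟨hch, hl⟩ := hs
    rw [List.isChain_cons_cons] at hch
    rw [List.getLast_cons_cons] at hl
    exact ⟨⟨hch.2, hl⟩, hch.1⟩

theorem chainConcatStep_iterate_length (hchain : ∀ k, List.IsChain r (u k :: c k :: m k))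
    (hlast : ∀ k, (c k :: m k).getLast (List.cons_ne_nil _ _) = u (k + 1))
    {a : α} {l : List α} {k : ℕ} (hs : ChainConcatInv r u (a, l, k)) :
    (chainConcatStep c m)^[l.length] (a, l, k) = (u k, [], k) := by
  induction l generalizing a with
  | nil => simpa using hs.2
  | cons b l ih => exact ih (hs.step hchain hlast).1

theorem exists_rel_seq_through_of_transGen (hu : ∀ i, Relation.TransGen r (u i) (u (i + 1))) :
    ∃ x : ℕ → α, (∀ n, r (x n) (x (n + 1))) ∧ ∀ i, ∃ n, x n = u i := by
  have hblock : ∀ i, ∃ c m, List.IsChain r (u i :: c :: m) ∧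
      (c :: m).getLast (List.cons_ne_nil _ _) = u (i + 1) := by
    intro i
    obtain ⟨c, hc, hcu⟩ := Relation.TransGen.head'_iff.1 (hu i)
    obtain ⟨m, hm, hlast⟩ := List.exists_isChain_cons_of_relationReflTransGen hcu
    exact ⟨c, m, hm.cons_cons hc, hlast⟩
  choose c m hchain hlast using hblock
  set step := chainConcatStep c m
  let x₀ : α × List α × ℕ := (u 0, [], 0)
  have inv_iter : ∀ n, ChainConcatInv r u (step^[n] x₀) := by
    intro n
    induction n with
    | zero => exact ⟨List.isChain_singleton _, rfl⟩
    | succ n ih =>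
      rw [Function.iterate_succ_apply']
      exact (ih.step hchain hlast).1
  have visits : ∀ k, ∃ n, step^[n] x₀ = (u k, [], k) := by
    intro k
    induction k with
    | zero => exact ⟨0, rfl⟩
    | succ k ih =>
      obtain ⟨n, hn⟩ := ih
      have hinv := ((inv_iter n).step hchain hlast).1
      rw [hn] at hinv
      refine ⟨(m k).length + (n + 1), ?_⟩
      rw [Function.iterate_add_apply, Function.iterate_succ_apply', hn]
      exact chainConcatStep_iterate_length hchain hlast hinv
  refine ⟨fun n => (step^[n] x₀).1, fun n => ?_, fun k => ?_⟩
  · simpa only [Function.iterate_succ_apply'] using ((inv_iter n).step hchain hlast).2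
  · obtain ⟨n, hn⟩ := visits k
    exact ⟨n, by simp only [hn]⟩

end ChainConcat

theorem List.exists_eq_append_cons_append_cons_of_not_nodup_map {α β : Type*} (f : α → β)
    {l : List α} (h : ¬ (l.map f).Nodup) :
    ∃ l₁ a l₂ b l₃, l = l₁ ++ a :: (l₂ ++ b :: l₃) ∧ f a = f b := by
  induction l with
  | nil => simp at h
  | cons x t ih =>
    rw [List.map_cons, List.nodup_cons, not_and_or, not_not] at h
    rcases h with hx | ht
    · obtain ⟨y, hy, hfy⟩ := List.mem_map.1 hx
      obtain ⟨l₂, l₃, rfl⟩ := List.append_of_mem hy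
      exact ⟨[], x, l₂, y, l₃, rfl, hfy.symm⟩
    · obtain ⟨l₁, a, l₂, b, l₃, rfl, hab⟩ := ih ht
      exact ⟨x :: l₁, a, l₂, b, l₃, rfl, hab⟩

namespace DGraph

variable (E : DGraph)

theorem isWalkFrom_nil (u : E.V) : E.IsWalkFrom u [] :=
  ⟨List.isChain_nil, by simp⟩

theorem isWalkFrom_cons {u : E.V} {e : E.Ed} {es : List E.Ed} :
    E.IsWalkFrom u (e :: es) ↔ E.s e = u ∧ E.IsWalkFrom (E.r e) es := by
  constructor
  · rintro ⟨hch, hhead⟩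
    replace hch := List.isChain_cons.1 hch
    exact ⟨hhead e rfl, hch.2, fun f hf => (hch.1 f hf).symm⟩
  · rintro ⟨hs, hch, hhead⟩
    refine ⟨List.isChain_cons.2 ⟨fun f hf => (hhead f hf).symm, hch⟩, ?_⟩
    simpa using hs

theorem endVert_cons (u : E.V) (e : E.Ed) (es : List E.Ed) :
    E.endVert u (e :: es) = E.endVert (E.r e) es := by
  cases es with
  | nil => rfl
  | cons f es => simp [endVert, List.getLast?_eq_some_getLast]

theorem endVert_append (u : E.V) (l₁ l₂ : List E.Ed) :
    E.endVert u (l₁ ++ l₂) = E.endVert (E.endVert u l₁) l₂ := by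
  induction l₁ generalizing u with
  | nil => rfl
  | cons e l ih => simp only [List.cons_append, endVert_cons, ih]

theorem isWalkFrom_append {u : E.V} {l₁ l₂ : List E.Ed} :
    E.IsWalkFrom u (l₁ ++ l₂) ↔ E.IsWalkFrom u l₁ ∧ E.IsWalkFrom (E.endVert u l₁) l₂ := by
  induction l₁ generalizing u with
  | nil => simp [isWalkFrom_nil, endVert]
  | cons e l ih => simp only [List.cons_append, isWalkFrom_cons, ih, endVert_cons, and_assoc]

theorem reaches_endVert {u : E.V} {es : List E.Ed} (h : E.IsWalkFrom u es) :
    E.Reaches u (E.endVert u es) := by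
  induction es generalizing u with
  | nil => exact Relation.ReflTransGen.refl
  | cons e es ih =>
    rw [isWalkFrom_cons] at h
    rw [endVert_cons]
    exact Relation.ReflTransGen.head ⟨e, h.1, rfl⟩ (ih h.2)

theorem exists_isWalkFrom_of_reaches {u w : E.V} (h : E.Reaches u w) :
    ∃ es, E.IsWalkFrom u es ∧ E.endVert u es = w := by
  induction h using Relation.ReflTransGen.head_induction_on with
  | refl => exact ⟨[], isWalkFrom_nil E _, rfl⟩
  | head hadj _ ih =>
    obtain ⟨e, hs, hr⟩ := hadj
    obtain ⟨es, hw, he⟩ := ih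
    exact ⟨e :: es, (isWalkFrom_cons E).2 ⟨hs, hr ▸ hw⟩, by rw [endVert_cons, hr, he]⟩

theorem reaches_of_mem_walkVerts {u x : E.V} {es : List E.Ed}
    (h : E.IsWalkFrom u es) (hx : x ∈ E.walkVerts u es) : E.Reaches u x := by
  obtain rfl | ⟨e, he, rfl⟩ := hx
  · exact Relation.ReflTransGen.refl
  obtain ⟨l₁, l₂, rfl⟩ := List.append_of_mem he
  have hw : E.IsWalkFrom u (l₁ ++ [e]) :=
    ((E.isWalkFrom_append.1 (by simpa using h)).1)
  simpa [endVert_append, endVert] using E.reaches_endVert hw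


theorem exists_isCycle_of_closed_walk {u : E.V} {es : List E.Ed} (hw : E.IsWalkFrom u es)
    (hne : es ≠ []) (hclosed : E.endVert u es = u) :
    ∃ c cs, E.Reaches u c ∧ E.IsCycle c cs := by
  induction hlen : es.length using Nat.strong_induction_on generalizing u es with
  | _ n ih =>
  by_cases hnd : (es.map E.s).Nodup
  · exact ⟨u, es, .refl, hne, hw, hclosed, hnd⟩
  -- a repeated source `E.s a = E.s b` cuts out the shorter closed walk `a :: l₂`
  obtain ⟨l₁, a, l₂, b, l₃, rfl, hab⟩ :=
    List.exists_eq_append_cons_append_cons_of_not_nodup_map E.s hnd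
  rw [← List.cons_append, isWalkFrom_append, isWalkFrom_append] at hw
  obtain ⟨hw₁, hwa, hwb⟩ := hw
  have hsa : E.s a = E.endVert u l₁ := ((E.isWalkFrom_cons).1 hwa).1
  have hsb : E.s b = E.endVert (E.endVert u l₁) (a :: l₂) := ((E.isWalkFrom_cons).1 hwb).1
  have hlt : (a :: l₂).length < n := by
    rw [← hlen]
    simp only [List.length_append, List.length_cons]
    omega
  obtain ⟨c, cs, hxc, hcyc⟩ :=
    ih _ hlt hwa (List.cons_ne_nil _ _) (by rw [← hsb, ← hab, hsa]) rfl
  exact ⟨c, cs, (E.reaches_endVert hw₁).trans hxc, hcyc⟩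

theorem exists_isCycle_tree_subset_root {u : E.V} (hu : ¬ E.IsSink u)
    (hback : ∀ t, E.Reaches u t → E.Reaches t u) :
    ∃ c cs, E.Reaches u c ∧ E.IsCycle c cs ∧
      E.tree (E.walkVerts c cs) ⊆ E.root (E.walkVerts c cs) := by
  obtain ⟨e, he⟩ := Set.nonempty_iff_ne_empty.2 hu
  obtain ⟨es, hw, hend⟩ :=
    E.exists_isWalkFrom_of_reaches (hback _ (Relation.ReflTransGen.single ⟨e, he, rfl⟩))
  obtain ⟨c, cs, huc, hcyc⟩ := E.exists_isCycle_of_closed_walk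
    ((E.isWalkFrom_cons).2 ⟨he, hw⟩) (List.cons_ne_nil _ _) (by rw [endVert_cons, hend])
  refine ⟨c, cs, huc, hcyc, ?_⟩
  rintro t ⟨x, hx, hxt⟩
  have hut : E.Reaches u t := huc.trans ((E.reaches_of_mem_walkVerts hcyc.2.1 hx).trans hxt)
  exact ⟨c, Set.mem_insert _ _, (hback t hut).trans huc⟩

theorem exists_isInfPath_of_adj {x : ℕ → E.V} (hx : ∀ n, E.Adj (x n) (x (n + 1))) :
    ∃ f, E.IsInfPath f ∧ E.infVerts f = Set.range x := by
  choose f hs hr using hx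
  exact ⟨f, fun n => (hr n).trans (hs (n + 1)).symm, by simp only [infVerts, hs]⟩

theorem exists_descending_infPath {v : E.V}
    (h : ∀ x, E.Reaches v x → ∃ y, E.Reaches x y ∧ ¬ E.Reaches y x) :
    ∃ f : ℕ → E.Ed, E.IsInfPath f ∧ v ∈ E.infVerts f ∧
      ∃ w : ℕ → E.V, (∀ i, w i ∈ E.infVerts f) ∧
        ∀ i, E.Reaches (w i) (w (i + 1)) ∧ ¬ E.Reaches (w (i + 1)) (w i) := by
  obtain ⟨w, hw0, hw⟩ := exists_seq_of_forall_exists_rel (p := E.Reaches v)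
    (r := fun x y => E.Reaches x y ∧ ¬ E.Reaches y x)
    (fun x hx => let ⟨y, hxy, hyx⟩ := h x hx; ⟨y, hx.trans hxy, hxy, hyx⟩)
    Relation.ReflTransGen.refl
  have hstep : ∀ i, Relation.TransGen E.Adj (w i) (w (i + 1)) := fun i =>
    (Relation.reflTransGen_iff_eq_or_transGen.1 (hw i).1).resolve_left
      fun heq => (hw i).2 (heq ▸ .refl)
  obtain ⟨x, hadj, hvisit⟩ := exists_rel_seq_through_of_transGen hstep
  obtain ⟨f, hf, hverts⟩ := E.exists_isInfPath_of_adj hadj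
  exact ⟨f, hf, hw0 ▸ hverts ▸ hvisit 0, w, fun i => hverts ▸ hvisit i, hw⟩

end DGraph

/-- Proposition: each vertex of a graph connects to a sink, to a
vertex on an extreme cycle, to a vertex on a cycle without exits, or lies on an
infinite path containing vertices `v₀ > v₁ > v₂ > …`. -/
theorem every_vertex_connects_to_terminal (E : DGraph) (v : E.V) :
    (∃ w, E.Reaches v w ∧ E.IsSink w) ∨
    (∃ w, E.Reaches v w ∧ ∃ u es, E.IsExtremeCycle u es ∧ w ∈ E.walkVerts u es) ∨
    (∃ w, E.Reaches v w ∧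
      ∃ u es, E.IsCycle u es ∧ ¬ E.HasExit u es ∧ w ∈ E.walkVerts u es) ∨
    (∃ f : ℕ → E.Ed, E.IsInfPath f ∧ v ∈ E.infVerts f ∧
      ∃ w : ℕ → E.V, (∀ i, w i ∈ E.infVerts f) ∧
        ∀ i, E.Reaches (w i) (w (i + 1)) ∧ ¬ E.Reaches (w (i + 1)) (w i)) := by
  by_cases hsink : ∃ w, E.Reaches v w ∧ E.IsSink w
  · exact Or.inl hsink
  by_cases hcyc : ∃ c cs, E.Reaches v c ∧ E.IsCycle c cs ∧
      E.tree (E.walkVerts c cs) ⊆ E.root (E.walkVerts c cs)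
  · obtain ⟨c, cs, hvc, hcyc, htree⟩ := hcyc
    by_cases hexit : E.HasExit c cs
    · exact Or.inr (Or.inl ⟨c, hvc, c, cs, ⟨hcyc, hexit, htree⟩, Set.mem_insert _ _⟩)
    · exact Or.inr (Or.inr (Or.inl ⟨c, hvc, c, cs, hcyc, hexit, Set.mem_insert _ _⟩))
  refine Or.inr (Or.inr (Or.inr (E.exists_descending_infPath fun x hvx => ?_)))
  by_contra! hback
  obtain ⟨c, cs, hxc, hcyc'⟩ :=
    E.exists_isCycle_tree_subset_root (fun hx => hsink ⟨x, hvx, hx⟩) hback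
  exact hcyc ⟨c, cs, hvx.trans hxc, hcyc'⟩
end

section
/- Let E be a directed graph and α a terminal path of E. If β is an infinite path which contains a vertex v of α, then the suffix γ of β starting at v is terminal and R(α⁰) = R(β⁰) = R(γ⁰). -/
/-!
Every vertex of an infinite path `γ` leaving from a vertex of the terminal path `α` lies in
`T(α⁰)`, so `T(γ⁰) ⊆ T(α⁰)` and the conditions on infinite emitters and cycles pass to `γ`.
An infinite path `δ` leaving from `γ⁰` becomes, after prepending the finite piece of `γ` that
leads to it, a path `σ` leaving from `α⁰`; since `δ⁰ ⊆ σ⁰ ⊆ R(δ⁰)`, we get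
`T(δ⁰) ⊆ T(σ⁰) ⊆ R(σ⁰) = R(δ⁰)`. Two infinite paths from the same vertex whose trees lie in their
roots lie in each other's trees, hence have equal roots; applied to `γ` and the suffix of `α`
at `v` this gives `R(α⁰) = R(γ⁰)`, while a suffix of `β` always has the root of `β`.
-/

namespace DGraph

variable {E : DGraph}

theorem root_subset_root_of_subset_root {W W' : Set E.V} (h : W ⊆ E.root W') :
    E.root W ⊆ E.root W' := by
  rintro u ⟨w, hw, huw⟩
  obtain ⟨w', hw', hww'⟩ := h hw
  exact ⟨w', hw', huw.trans hww'⟩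

theorem tree_subset_tree_of_subset_tree {W W' : Set E.V} (h : W ⊆ E.tree W') :
    E.tree W ⊆ E.tree W' := by
  rintro u ⟨w, hw, hwu⟩
  obtain ⟨w', hw', hw'w⟩ := h hw
  exact ⟨w', hw', hw'w.trans hwu⟩

theorem tree_mono {W W' : Set E.V} (h : W ⊆ W') : E.tree W ⊆ E.tree W' :=
  fun _ ⟨w, hw, hwu⟩ => ⟨w, h hw, hwu⟩

theorem root_eq_of_subset_tree {W W' : Set E.V} (hW : E.tree W ⊆ E.root W)
    (hW' : E.tree W' ⊆ E.root W') (hWW' : W ⊆ E.tree W') (hW'W : W' ⊆ E.tree W) :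
    E.root W = E.root W' :=
  (root_subset_root_of_subset_root (hWW'.trans hW')).antisymm
    (root_subset_root_of_subset_root (hW'W.trans hW))

theorem tree_subset_root_of_subset_of_subset_root {W W' : Set E.V} (hWW' : W ⊆ W')
    (hW'W : W' ⊆ E.root W) (h : E.tree W' ⊆ E.root W') : E.tree W ⊆ E.root W :=
  (tree_mono hWW').trans (h.trans (root_subset_root_of_subset_root hW'W))

namespace IsInfPath

variable {p q : ℕ → E.Ed}

theorem reaches (hp : E.IsInfPath p) {i j : ℕ} (hij : i ≤ j) :
    E.Reaches (E.s (p i)) (E.s (p j)) := by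
  induction j, hij using Nat.le_induction with
  | base => exact .refl
  | succ j _ ih => exact ih.tail ⟨p j, rfl, hp j⟩

theorem shift (hp : E.IsInfPath p) (k : ℕ) : E.IsInfPath fun n => p (n + k) := fun n => by
  simpa only [Nat.add_right_comm n 1 k] using hp (n + k)

theorem infVerts_subset_tree (hp : E.IsInfPath p) {W : Set E.V} (h : E.s (p 0) ∈ W) :
    E.infVerts p ⊆ E.tree W := by
  rintro _ ⟨n, rfl⟩
  exact ⟨_, h, hp.reaches n.zero_le⟩

theorem root_infVerts_shift (hp : E.IsInfPath p) (k : ℕ) :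
    E.root (E.infVerts fun n => p (n + k)) = E.root (E.infVerts p) := by
  refine (root_subset_root_of_subset_root ?_).antisymm (root_subset_root_of_subset_root ?_)
  · rintro _ ⟨n, rfl⟩
    exact ⟨_, ⟨n + k, rfl⟩, .refl⟩
  · rintro _ ⟨n, rfl⟩
    exact ⟨_, ⟨n, rfl⟩, hp.reaches (n.le_add_right k)⟩

end IsInfPath

def splice (p : ℕ → E.Ed) (m : ℕ) (q : ℕ → E.Ed) (n : ℕ) : E.Ed :=
  if n < m then p n else q (n - m)

section splice

variable {p q : ℕ → E.Ed} {m : ℕ}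

theorem IsInfPath.splice (hp : E.IsInfPath p) (hq : E.IsInfPath q)
    (hpq : E.s (q 0) = E.s (p m)) : E.IsInfPath (splice p m q) := by
  intro n
  unfold DGraph.splice
  rcases lt_trichotomy (n + 1) m with hlt | heq | hgt
  · rw [if_pos (by omega), if_pos hlt]
    exact hp n
  · rw [if_pos (by omega), if_neg (by omega), heq, Nat.sub_self, hpq, ← heq]
    exact hp n
  · rw [if_neg (by omega), if_neg (by omega), show n + 1 - m = n - m + 1 by omega]
    exact hq (n - m)

theorem s_splice_zero (hpq : E.s (q 0) = E.s (p m)) : E.s (splice p m q 0) = E.s (p 0) := by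
  unfold splice
  split_ifs with hm
  · rfl
  · obtain rfl : m = 0 := by omega
    exact hpq

theorem infVerts_subset_infVerts_splice : E.infVerts q ⊆ E.infVerts (splice p m q) := by
  rintro _ ⟨n, rfl⟩
  refine ⟨n + m, ?_⟩
  simp only [splice, if_neg (Nat.not_lt.2 (m.le_add_left n)), Nat.add_sub_cancel]

theorem infVerts_splice_subset_root (hp : E.IsInfPath p) (hpq : E.s (q 0) = E.s (p m)) :
    E.infVerts (splice p m q) ⊆ E.root (E.infVerts q) := by
  rintro _ ⟨n, rfl⟩
  show E.s (splice p m q n) ∈ _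
  unfold splice
  split_ifs with hn
  · exact ⟨_, ⟨0, hpq⟩, hp.reaches hn.le⟩
  · exact ⟨_, ⟨n - m, rfl⟩, .refl⟩

end splice

namespace IsTerminalPath

variable {f γ : ℕ → E.Ed}

theorem tree_subset_root (hf : E.IsTerminalPath f) :
    E.tree (E.infVerts f) ⊆ E.root (E.infVerts f) :=
  hf.2.2 f hf.1 ⟨0, rfl⟩

theorem of_start_mem (hf : E.IsTerminalPath f) (hγ : E.IsInfPath γ)
    (hγ0 : E.s (γ 0) ∈ E.infVerts f) : E.IsTerminalPath γ := by
  refine ⟨hγ, fun u hu => hf.2.1 u ?_, ?_⟩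
  · exact tree_subset_tree_of_subset_tree (hγ.infVerts_subset_tree hγ0) hu
  · rintro δ hδ ⟨m, hm⟩
    have hσ0 : E.s (splice γ m δ 0) ∈ E.infVerts f := by
      rwa [s_splice_zero hm.symm]
    exact tree_subset_root_of_subset_of_subset_root infVerts_subset_infVerts_splice
      (infVerts_splice_subset_root hγ hm.symm) (hf.2.2 _ (hγ.splice hδ hm.symm) hσ0)

theorem root_eq_of_start_mem (hf : E.IsTerminalPath f) (hγ : E.IsInfPath γ)
    (hγ0 : E.s (γ 0) ∈ E.infVerts f) : E.root (E.infVerts f) = E.root (E.infVerts γ) := by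
  obtain ⟨i, hi : E.s (f i) = E.s (γ 0)⟩ := hγ0
  have hfi : E.IsInfPath fun n => f (n + i) := hf.1.shift i
  have hfi0 : E.s (f (0 + i)) = E.s (γ 0) := by rw [Nat.zero_add, hi]
  rw [← hf.1.root_infVerts_shift i]
  exact root_eq_of_subset_tree (hf.of_start_mem hfi ⟨0 + i, rfl⟩).tree_subset_root
    (hf.of_start_mem hγ ⟨i, hi⟩).tree_subset_root
    (hfi.infVerts_subset_tree ⟨0, hfi0.symm⟩) (hγ.infVerts_subset_tree ⟨0, hfi0⟩)

end IsTerminalPath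

end DGraph

/-- Lemma, part 2: if an infinite path `β` contains a vertex `v` of a
terminal path `α`, then the suffix `γ` of `β` starting at `v` is terminal and
`R(α⁰) = R(β⁰) = R(γ⁰)`. -/
theorem suffix_at_vertex_of_terminal (E : DGraph) (f : ℕ → E.Ed)
    (hf : E.IsTerminalPath f) (g : ℕ → E.Ed) (hg : E.IsInfPath g)
    (v : E.V) (hv : v ∈ E.infVerts f) (k : ℕ) (hk : E.s (g k) = v) :
    E.IsTerminalPath (fun n => g (n + k)) ∧
    E.root (E.infVerts f) = E.root (E.infVerts g) ∧
    E.root (E.infVerts g) = E.root (E.infVerts (fun n => g (n + k))) := by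
  have hγ0 : E.s (g (0 + k)) ∈ E.infVerts f := by rwa [Nat.zero_add, hk]
  have hroot := hg.root_infVerts_shift k
  exact ⟨hf.of_start_mem (hg.shift k) hγ0,
    (hf.root_eq_of_start_mem (hg.shift k) hγ0).trans hroot, hroot.symm⟩
end
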